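/- arXiv:1906.03726 — 4 statements merged into one kernel-verified Lean document; each statement's English description precedes it below -/
import Mathlib

section
/- Let (E,τ) be a topological space and k a kernel on E whose RKHS is H. If k is continuous at the diagonal, i.e., lim_{y→x} k(x,y) = lim_{y→x} k(y,y) = k(x,x) for all x ∈ E, then every h ∈ H is continuous. -/
/-!
By the reproducing property `|h(x) - h(y)| ≤ ‖K x - K y‖ ‖h‖`, and
`‖K y - K x‖² = k(y,y) - 2 k(x,y) + k(x,x)`, which tends to `0` as `y → x` when `k` is
continuous at the diagonal. So the feature map `K` is continuous, hence so is `⟪h, K ·⟫`.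
-/

open Filter Topology
open scoped InnerProductSpace

section

variable {α H : Type*} [NormedAddCommGroup H] [InnerProductSpace ℝ H]

theorem tendsto_nhds_of_tendsto_inner_of_tendsto_inner_self {l : Filter α} {f : α → H} {a : H}
    (h_inner : Tendsto (fun y => ⟪a, f y⟫_ℝ) l (𝓝 ⟪a, a⟫_ℝ))
    (h_self : Tendsto (fun y => ⟪f y, f y⟫_ℝ) l (𝓝 ⟪a, a⟫_ℝ)) :
    Tendsto f l (𝓝 a) := by
  have h_sq : Tendsto (fun y => ‖f y - a‖ ^ 2) l (𝓝 0) := by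
    have h_expand : ∀ y, ‖f y - a‖ ^ 2 = ⟪f y, f y⟫_ℝ - 2 * ⟪a, f y⟫_ℝ + ⟪a, a⟫_ℝ := by
      intro y
      rw [norm_sub_sq_real, real_inner_comm, real_inner_self_eq_norm_sq,
        real_inner_self_eq_norm_sq]
    have h_lim := (h_self.sub (h_inner.const_mul 2)).add_const ⟪a, a⟫_ℝ
    rw [show ⟪a, a⟫_ℝ - 2 * ⟪a, a⟫_ℝ + ⟪a, a⟫_ℝ = 0 by ring] at h_lim
    simpa only [h_expand] using h_lim
  rw [tendsto_iff_norm_sub_tendsto_zero]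
  simpa only [Real.sqrt_sq (norm_nonneg _), Real.sqrt_zero] using h_sq.sqrt

end

/-- If the kernel `k` of an RKHS `H` on a topological space `E` is continuous at
the diagonal, i.e. `lim_{y→x} k(x,y) = lim_{y→x} k(y,y) = k(x,x)` for all `x`, then every
`h ∈ H` (whose evaluation is `x ↦ ⟪h, K x⟫`) is continuous. -/
theorem stmt_3 {E H : Type*} [TopologicalSpace E]
    [NormedAddCommGroup H] [InnerProductSpace ℝ H]
    (k : E → E → ℝ) (K : E → H)
    (hk : ∀ x y : E, k x y = ⟪K x, K y⟫_ℝ)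
    (hdiag : ∀ x : E,
      Filter.Tendsto (fun y => k x y) (nhds x) (nhds (k x x)) ∧
      Filter.Tendsto (fun y => k y y) (nhds x) (nhds (k x x)))
    (h : H) :
    Continuous fun x => ⟪h, K x⟫_ℝ := by
  have hK : Continuous K := continuous_iff_continuousAt.mpr fun x => by
    obtain ⟨h_row, h_diag⟩ := hdiag x
    simp only [hk] at h_row h_diag
    exact tendsto_nhds_of_tendsto_inner_of_tendsto_inner_self h_row h_diag
  exact continuous_const.inner hK
end

section
/- Let J : H → L²(μ) be a compact operator, f ∈ L²(μ), f₀ the orthogonal projection of f onto the closure of the image of J, and f_λ = J(J*J + λ)⁻¹J*f for λ > 0. Then ‖f₀ − f_λ‖_{L²(μ)} → 0 as λ → 0⁺. -/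
/-!
With `b = (J*J + λ)⁻¹`, the residual `R_λ = 1 - J b J*` satisfies `‖R_λ‖ ≤ 1`, because
`⟪b u, u⟫ = ‖J b u‖² + λ ‖b u‖²` dominates `‖J b u‖²`, and on the range of `J` one has
`R_λ (J h) = λ J b h`, of norm at most `√λ ‖h‖`. A uniformly bounded family of operators that
tends to `0` on a set tends to `0` on its closure, so `R_λ f₀ → 0`; finally `J* f = J* f₀` since
`f - f₀ ⊥ Im J`, whence `R_λ f₀ = f₀ - f_λ`.
-/

open scoped InnerProductSpace
open MeasureTheory

open Filter Topology ContinuousLinearMap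

theorem tendsto_apply_of_mem_closure_of_norm_le {ι 𝕜 E F : Type*} [NontriviallyNormedField 𝕜]
    [SeminormedAddCommGroup E] [SeminormedAddCommGroup F] [NormedSpace 𝕜 E] [NormedSpace 𝕜 F]
    {l : Filter ι} {T : ι → E →L[𝕜] F} {C : ℝ} (hT : ∀ᶠ i in l, ‖T i‖ ≤ C) {s : Set E}
    (hs : ∀ y ∈ s, Tendsto (fun i => T i y) l (𝓝 0)) {x : E} (hx : x ∈ closure s) :
    Tendsto (fun i => T i x) l (𝓝 0) := by
  rw [Metric.tendsto_nhds]
  intro ε hε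
  obtain ⟨y, hy, hxy⟩ := Metric.mem_closure_iff.mp hx (ε / (2 * (|C| + 1))) (by positivity)
  filter_upwards [hT, Metric.tendsto_nhds.mp (hs y hy) (ε / 2) (half_pos hε)] with i hTi hyi
  rw [dist_zero_right] at hyi ⊢
  rw [dist_eq_norm] at hxy
  have hCx : C * ‖x - y‖ < ε / 2 := by
    calc C * ‖x - y‖ ≤ (|C| + 1) * ‖x - y‖ := by gcongr; linarith [le_abs_self C]
      _ < (|C| + 1) * (ε / (2 * (|C| + 1))) := by gcongr
      _ = ε / 2 := by field_simp
  calc ‖T i x‖ = ‖T i (x - y) + T i y‖ := by rw [← map_add, sub_add_cancel]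
    _ ≤ ‖T i‖ * ‖x - y‖ + ‖T i y‖ := (norm_add_le _ _).trans (by gcongr; exact le_opNorm _ _)
    _ ≤ C * ‖x - y‖ + ‖T i y‖ := by gcongr
    _ < ε := by linarith

namespace Tikhonov

variable {H F : Type*} [NormedAddCommGroup H] [InnerProductSpace ℝ H] [CompleteSpace H]
  [NormedAddCommGroup F] [InnerProductSpace ℝ F] [CompleteSpace F]
  (J : H →L[ℝ] F) {lam : ℝ} {b : H →L[ℝ] H}

/-- The residual `g ↦ g - J (J*J + λ)⁻¹ J* g`, with `b` standing for `(J*J + λ)⁻¹`. -/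
noncomputable def residual (b : H →L[ℝ] H) : F →L[ℝ] F := 1 - J ∘L b ∘L adjoint J

@[simp]
theorem residual_apply (b : H →L[ℝ] H) (g : F) : residual J b g = g - J (b (adjoint J g)) := rfl

theorem adjoint_apply_apply_add_smul (hb : (adjoint J ∘L J + lam • 1) ∘L b = 1) (u : H) :
    adjoint J (J (b u)) + lam • b u = u := by
  simpa using congr($hb u)

theorem apply_adjoint_apply_add_smul (hb : b ∘L (adjoint J ∘L J + lam • 1) = 1) (u : H) :
    b (adjoint J (J u)) + lam • b u = u := by
  simpa using congr($hb u)

theorem inner_apply_self_eq (hb : (adjoint J ∘L J + lam • 1) ∘L b = 1) (u : H) :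
    ⟪b u, u⟫_ℝ = ‖J (b u)‖ ^ 2 + lam * ‖b u‖ ^ 2 := by
  calc ⟪b u, u⟫_ℝ = ⟪b u, adjoint J (J (b u)) + lam • b u⟫_ℝ := by
        rw [adjoint_apply_apply_add_smul J hb u]
    _ = ‖J (b u)‖ ^ 2 + lam * ‖b u‖ ^ 2 := by
      rw [inner_add_right, real_inner_smul_right, adjoint_inner_right, real_inner_self_eq_norm_sq,
        real_inner_self_eq_norm_sq]

theorem norm_residual_apply_le (hlam : 0 ≤ lam) (hb : (adjoint J ∘L J + lam • 1) ∘L b = 1)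
    (g : F) : ‖residual J b g‖ ≤ ‖g‖ := by
  set u := adjoint J g
  have hinner : ⟪g, J (b u)⟫_ℝ = ⟪b u, u⟫_ℝ := by
    rw [← adjoint_inner_left, real_inner_comm]
  have hsq : ‖residual J b g‖ ^ 2 ≤ ‖g‖ ^ 2 := by
    rw [residual_apply, norm_sub_sq_real, hinner, inner_apply_self_eq J hb]
    nlinarith [sq_nonneg ‖b u‖]
  exact (pow_le_pow_iff_left₀ (norm_nonneg _) (norm_nonneg _) two_ne_zero).mp hsq

theorem norm_residual_le (hlam : 0 ≤ lam) (hb : (adjoint J ∘L J + lam • 1) ∘L b = 1) :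
    ‖residual J b‖ ≤ 1 :=
  opNorm_le_bound _ zero_le_one fun g => by simpa using norm_residual_apply_le J hlam hb g

theorem residual_apply_apply (hb : b ∘L (adjoint J ∘L J + lam • 1) = 1) (h : H) :
    residual J b (J h) = lam • J (b h) := by
  rw [residual_apply, ← map_sub, ← map_smul,
    eq_sub_of_add_eq' (apply_adjoint_apply_add_smul J hb h)]

theorem norm_residual_apply_apply_le (hlam : 0 < lam) (hb₁ : (adjoint J ∘L J + lam • 1) ∘L b = 1)
    (hb₂ : b ∘L (adjoint J ∘L J + lam • 1) = 1) (h : H) :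
    ‖residual J b (J h)‖ ≤ √lam * ‖h‖ := by
  have hCS : ‖J (b h)‖ ^ 2 + lam * ‖b h‖ ^ 2 ≤ ‖b h‖ * ‖h‖ :=
    inner_apply_self_eq J hb₁ h ▸ real_inner_le_norm _ _
  have hsq : ‖residual J b (J h)‖ ^ 2 ≤ (√lam * ‖h‖) ^ 2 := by
    rw [residual_apply_apply J hb₂, norm_smul, Real.norm_of_nonneg hlam.le, mul_pow, mul_pow,
      Real.sq_sqrt hlam.le]
    -- `λ ‖J (b h)‖² ≤ λ ‖b h‖ ‖h‖ - λ² ‖b h‖² ≤ ‖h‖² / 4`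
    nlinarith [sq_nonneg (lam * ‖b h‖ - ‖h‖ / 2)]
  exact (pow_le_pow_iff_left₀ (norm_nonneg _) (by positivity) two_ne_zero).mp hsq

theorem tendsto_residual_apply_apply {B : ℝ → H →L[ℝ] H}
    (hB : ∀ lam : ℝ, 0 < lam → (adjoint J ∘L J + lam • 1) ∘L B lam = 1 ∧
      B lam ∘L (adjoint J ∘L J + lam • 1) = 1) (h : H) :
    Tendsto (fun lam => residual J (B lam) (J h)) (𝓝[>] 0) (𝓝 0) := by
  have hsqrt : Tendsto (fun lam : ℝ => √lam * ‖h‖) (𝓝[>] 0) (𝓝 0) := by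
    simpa using ((Real.continuous_sqrt.tendsto 0).mul_const ‖h‖).mono_left nhdsWithin_le_nhds
  refine squeeze_zero_norm' ?_ hsqrt
  filter_upwards [self_mem_nhdsWithin] with lam hlam
  exact norm_residual_apply_apply_le J hlam (hB lam hlam).1 (hB lam hlam).2 h

theorem tendsto_residual_apply_of_mem_closure {B : ℝ → H →L[ℝ] H}
    (hB : ∀ lam : ℝ, 0 < lam → (adjoint J ∘L J + lam • 1) ∘L B lam = 1 ∧
      B lam ∘L (adjoint J ∘L J + lam • 1) = 1) {g : F}
    (hg : g ∈ closure (LinearMap.range (J : H →ₗ[ℝ] F) : Set F)) :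
    Tendsto (fun lam => residual J (B lam) g) (𝓝[>] 0) (𝓝 0) := by
  have hbound : ∀ᶠ lam in 𝓝[>] 0, ‖residual J (B lam)‖ ≤ 1 :=
    eventually_nhdsWithin_of_forall fun lam hlam => norm_residual_le J hlam.le (hB lam hlam).1
  refine tendsto_apply_of_mem_closure_of_norm_le hbound ?_ hg
  rintro _ ⟨h, rfl⟩
  exact tendsto_residual_apply_apply J hB h

end Tikhonov

theorem stmt_12_general {E H : Type*} [MeasurableSpace E]
    [NormedAddCommGroup H] [InnerProductSpace ℝ H] [CompleteSpace H]
    (μ : Measure E)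
    (J : H →L[ℝ] Lp ℝ 2 μ)
    (f f₀ : Lp ℝ 2 μ)
    (hmem : f₀ ∈ closure (LinearMap.range (J : H →ₗ[ℝ] Lp ℝ 2 μ) : Set (Lp ℝ 2 μ)))
    (horth : ∀ h : H, ⟪f - f₀, J h⟫_ℝ = 0)
    (B : ℝ → H →L[ℝ] H)
    (hB : ∀ lam : ℝ, 0 < lam →
      ((ContinuousLinearMap.adjoint J).comp J + lam • (1 : H →L[ℝ] H)).comp (B lam) = 1 ∧
      (B lam).comp ((ContinuousLinearMap.adjoint J).comp J + lam • (1 : H →L[ℝ] H)) = 1) :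
    Filter.Tendsto (fun lam => ‖f₀ - J (B lam (ContinuousLinearMap.adjoint J f))‖)
      (nhdsWithin 0 (Set.Ioi 0)) (nhds 0) := by
  have hadj : adjoint J f = adjoint J f₀ := by
    refine sub_eq_zero.mp (ext_inner_right ℝ fun h => ?_)
    rw [← map_sub, adjoint_inner_left, horth, inner_zero_left]
  simpa [hadj] using (Tikhonov.tendsto_residual_apply_of_mem_closure J hB hmem).norm

/-- For compact `J : H → L²(μ)`, `f ∈ L²(μ)`, `f₀` the orthogonal projection of
`f` onto `cl(Im J)` and `f_λ = J(J*J + λ)⁻¹ J*f`, one has `‖f₀ − f_λ‖ → 0` as `λ → 0⁺`. -/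
theorem stmt_12 {E H : Type*} [MeasurableSpace E]
    [NormedAddCommGroup H] [InnerProductSpace ℝ H] [CompleteSpace H]
    (μ : Measure E)
    (J : H →L[ℝ] Lp ℝ 2 μ) (hJ : IsCompactOperator J)
    (f f₀ : Lp ℝ 2 μ)
    (hmem : f₀ ∈ closure (LinearMap.range (J : H →ₗ[ℝ] Lp ℝ 2 μ) : Set (Lp ℝ 2 μ)))
    (horth : ∀ h : H, ⟪f - f₀, J h⟫_ℝ = 0)
    (B : ℝ → H →L[ℝ] H)
    (hB : ∀ lam : ℝ, 0 < lam →
      ((ContinuousLinearMap.adjoint J).comp J + lam • (1 : H →L[ℝ] H)).comp (B lam) = 1 ∧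
      (B lam).comp ((ContinuousLinearMap.adjoint J).comp J + lam • (1 : H →L[ℝ] H)) = 1) :
    Filter.Tendsto (fun lam => ‖f₀ - J (B lam (ContinuousLinearMap.adjoint J f))‖)
      (nhdsWithin 0 (Set.Ioi 0)) (nhds 0) :=
  stmt_12_general μ J f f₀ hmem horth B hB
end

section
/- Let J : H → L²(μ) be a compact operator with f₀ ∈ Im J, i.e., f₀ = Jh for some h ∈ H, where f₀ is the projection of f onto cl(Im J), and f_λ = J(J*J+λ)⁻¹J*f. Then ‖f₀ − f_λ‖_{L²(μ)} ≤ (√λ/2) · min{‖h‖_H : h ∈ H, Jh = f₀} for all λ > 0. -/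
/-!
Write `f₀ = J h` and `g = (J*J + λ)⁻¹ h`. Since `f - f₀ ⊥ Im J`, `J* f = J* f₀`, so
`f₀ - f_λ = J (h - (J*J + λ)⁻¹ J*J h) = λ J g`. On the other hand `h = J*J g + λ g`, and
`‖a + b‖² ≥ 4 ⟪a, b⟫` with `⟪J*J g, λ g⟫ = λ ‖J g‖²` gives `‖h‖² ≥ 4 λ ‖J g‖²`,
i.e. `‖λ J g‖ ≤ (√λ / 2) ‖h‖`.
-/

open scoped InnerProductSpace
open MeasureTheory

theorem four_mul_real_inner_le_norm_add_sq {F : Type*} [NormedAddCommGroup F]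
    [InnerProductSpace ℝ F] (x y : F) : 4 * ⟪x, y⟫_ℝ ≤ ‖x + y‖ ^ 2 := by
  linarith [norm_add_sq_real x y, norm_sub_sq_real x y, sq_nonneg ‖x - y‖]

section Regularization

variable {F G : Type*} [NormedAddCommGroup F] [InnerProductSpace ℝ F] [CompleteSpace F]
  [NormedAddCommGroup G] [InnerProductSpace ℝ G] [CompleteSpace G]

theorem mul_norm_apply_le_sqrt_mul_norm_adjoint_comp_self_add (T : G →L[ℝ] F) {lam : ℝ}
    (hlam : 0 ≤ lam) (g : G) :
    lam * ‖T g‖ ≤ Real.sqrt lam / 2 * ‖T.adjoint (T g) + lam • g‖ := by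
  have hinner : ⟪T.adjoint (T g), lam • g⟫_ℝ = lam * ‖T g‖ ^ 2 := by
    rw [real_inner_smul_right, ContinuousLinearMap.adjoint_inner_left,
      real_inner_self_eq_norm_sq]
  have hsq : (lam * ‖T g‖) ^ 2 ≤ (Real.sqrt lam / 2 * ‖T.adjoint (T g) + lam • g‖) ^ 2 := by
    have key := four_mul_real_inner_le_norm_add_sq (T.adjoint (T g)) (lam • g)
    rw [hinner] at key
    rw [mul_pow, mul_pow, div_pow, Real.sq_sqrt hlam]
    nlinarith [mul_le_mul_of_nonneg_left key hlam]
  exact (pow_le_pow_iff_left₀ (by positivity) (by positivity) two_ne_zero).mp hsq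

variable (T : G →L[ℝ] F) {lam : ℝ} (B : G →L[ℝ] G)

theorem apply_sub_apply_resolvent_adjoint_eq
    (hB : B.comp (T.adjoint.comp T + lam • (1 : G →L[ℝ] G)) = 1) (h : G) :
    T h - T (B (T.adjoint (T h))) = lam • T (B h) := by
  have hBh : B (T.adjoint (T h)) + lam • B h = h := by
    simpa using congrArg (fun A : G →L[ℝ] G => A h) hB
  rw [← map_sub, ← T.map_smul, eq_sub_of_add_eq' hBh]

theorem norm_apply_sub_apply_resolvent_adjoint_le (hlam : 0 ≤ lam)
    (hB₁ : (T.adjoint.comp T + lam • (1 : G →L[ℝ] G)).comp B = 1)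
    (hB₂ : B.comp (T.adjoint.comp T + lam • (1 : G →L[ℝ] G)) = 1) (h : G) :
    ‖T h - T (B (T.adjoint (T h)))‖ ≤ Real.sqrt lam / 2 * ‖h‖ := by
  have hBh : T.adjoint (T (B h)) + lam • B h = h := by
    simpa using congrArg (fun A : G →L[ℝ] G => A h) hB₁
  rw [apply_sub_apply_resolvent_adjoint_eq T B hB₂, norm_smul, Real.norm_of_nonneg hlam]
  simpa only [hBh] using mul_norm_apply_le_sqrt_mul_norm_adjoint_comp_self_add T hlam (B h)

theorem adjoint_apply_eq_of_inner_sub_apply_eq_zero {f f₀ : F}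
    (horth : ∀ h : G, ⟪f - f₀, T h⟫_ℝ = 0) : T.adjoint f = T.adjoint f₀ := by
  rw [← sub_eq_zero, ← map_sub]
  exact ext_inner_right ℝ fun x => by
    rw [ContinuousLinearMap.adjoint_inner_left, horth, inner_zero_left]

end Regularization

theorem stmt_13_general {E H : Type*} [MeasurableSpace E]
    [NormedAddCommGroup H] [InnerProductSpace ℝ H] [CompleteSpace H]
    (μ : Measure E)
    (J : H →L[ℝ] Lp ℝ 2 μ)
    (f f₀ : Lp ℝ 2 μ)
    (horth : ∀ h : H, ⟪f - f₀, J h⟫_ℝ = 0)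
    (hex : ∃ h : H, J h = f₀)
    (lam : ℝ) (hlam : 0 < lam)
    (B : H →L[ℝ] H)
    (hB1 : ((ContinuousLinearMap.adjoint J).comp J + lam • (1 : H →L[ℝ] H)).comp B = 1)
    (hB2 : B.comp ((ContinuousLinearMap.adjoint J).comp J + lam • (1 : H →L[ℝ] H)) = 1) :
    ‖f₀ - J (B (ContinuousLinearMap.adjoint J f))‖ ≤
      Real.sqrt lam / 2 * sInf {r : ℝ | ∃ h : H, J h = f₀ ∧ ‖h‖ = r} := by
  obtain ⟨h₀, hh₀⟩ := hex
  have hne : {r : ℝ | ∃ h : H, J h = f₀ ∧ ‖h‖ = r}.Nonempty := ⟨‖h₀‖, h₀, hh₀, rfl⟩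
  rw [adjoint_apply_eq_of_inner_sub_apply_eq_zero J horth, ← smul_eq_mul,
    ← Real.sInf_smul_of_nonneg (by positivity)]
  refine le_csInf hne.smul_set ?_
  rintro _ ⟨_, ⟨h, rfl, rfl⟩, rfl⟩
  exact norm_apply_sub_apply_resolvent_adjoint_le J B hlam.le hB1 hB2 h

/-- For compact `J : H → L²(μ)`, if the projection `f₀` of `f` onto `cl(Im J)`
lies in `Im J`, then for all `λ > 0`, with `f_λ = J(J*J + λ)⁻¹ J*f`,
`‖f₀ − f_λ‖ ≤ (√λ/2) · min{‖h‖ : Jh = f₀}`. -/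
theorem stmt_13 {E H : Type*} [MeasurableSpace E]
    [NormedAddCommGroup H] [InnerProductSpace ℝ H] [CompleteSpace H]
    (μ : Measure E)
    (J : H →L[ℝ] Lp ℝ 2 μ) (hJ : IsCompactOperator J)
    (f f₀ : Lp ℝ 2 μ)
    (hmem : f₀ ∈ closure (LinearMap.range (J : H →ₗ[ℝ] Lp ℝ 2 μ) : Set (Lp ℝ 2 μ)))
    (horth : ∀ h : H, ⟪f - f₀, J h⟫_ℝ = 0)
    (hex : ∃ h : H, J h = f₀)
    (lam : ℝ) (hlam : 0 < lam)
    (B : H →L[ℝ] H)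
    (hB1 : ((ContinuousLinearMap.adjoint J).comp J + lam • (1 : H →L[ℝ] H)).comp B = 1)
    (hB2 : B.comp ((ContinuousLinearMap.adjoint J).comp J + lam • (1 : H →L[ℝ] H)) = 1) :
    ‖f₀ - J (B (ContinuousLinearMap.adjoint J f))‖ ≤
      Real.sqrt lam / 2 * sInf {r : ℝ | ∃ h : H, J h = f₀ ∧ ‖h‖ = r} :=
  stmt_13_general μ J f f₀ horth hex lam hlam B hB1 hB2
end

section
/- Let μ be a probability measure on E, k a kernel with κ(x) = √(k(x,x)) satisfying 0 < ‖κ‖_{L²(μ)} < ∞, and let w = dμ̃/dμ be the density of an equivalent probability measure μ̃ ∼ μ. Define κ̃(x) = κ(x)/√(w(x)). Then for any p ∈ (2, ∞], ‖κ̃‖_{L^p(μ̃)} ≥ ‖κ‖_{L²(μ)}, with equality if and only if κ > 0 μ-a.s. and w = κ²/‖κ‖²_{L²(μ)} μ-a.s.; in that case κ̃ = ‖κ‖_{L²(μ)} is constant μ-a.s. -/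
/-!
Since `w > 0` a.e., the change of density gives `‖κ / √w‖_{L²(μ̃)} = ‖κ‖_{L²(μ)}`, and on the
probability space `(E, μ̃)` the `Lᵖ` norm dominates the `L²` norm. If `‖g‖_p = ‖g‖_q` for some
exponents `q < p`, then `|g|` is a.e. constant: otherwise strict Jensen for `t ↦ t ^ (p / q)`
applied to `|g| ^ q` gives `‖g‖_q < ‖g‖_p` (for `p = ∞`, compare with an intermediate finite
exponent). So equality means `κ / √w = ‖κ‖_{L²(μ)}` a.e., which unwinds to the stated form of `w`.
-/

open MeasureTheory
open scoped ENNReal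

theorem Real.div_sqrt_eq_sqrt_iff {a b c : ℝ} (hb : 0 < b) (hc : 0 < c) :
    a / √b = √c ↔ 0 < a ∧ b = a ^ 2 / c := by
  constructor
  · intro h
    have ha : a = √c * √b := by rw [← h, div_mul_cancel₀ _ (Real.sqrt_pos.2 hb).ne']
    refine ⟨ha ▸ by positivity, ?_⟩
    rw [ha, mul_pow, Real.sq_sqrt hc.le, Real.sq_sqrt hb.le, mul_div_cancel_left₀ _ hc.ne']
  · rintro ⟨ha, rfl⟩
    rw [Real.sqrt_div' _ hc.le, Real.sqrt_sq ha.le, div_div_cancel₀ ha.ne']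

theorem Real.enorm_sq_eq_ofReal_sq (a : ℝ) : ‖a‖ₑ ^ 2 = ENNReal.ofReal (a ^ 2) := by
  rw [Real.enorm_eq_ofReal_abs, ← ENNReal.ofReal_pow (abs_nonneg a), sq_abs]

namespace MeasureTheory

variable {α E : Type*} [MeasurableSpace α] {μ : Measure α} [NormedAddCommGroup E]

theorem MemLp.integral_norm_rpow_eq {f : α → E} {p : ℝ≥0∞} (hp : p ≠ 0) (hp_top : p ≠ ∞)
    (hf : MemLp f p μ) :
    ∫ x, ‖f x‖ ^ p.toReal ∂μ = (eLpNorm f p μ).toReal ^ p.toReal := by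
  rw [hf.eLpNorm_eq_integral_rpow_norm hp hp_top, ENNReal.toReal_ofReal (by positivity),
    Real.rpow_inv_rpow (integral_nonneg fun _ => by positivity)
      (ENNReal.toReal_ne_zero.2 ⟨hp, hp_top⟩)]

theorem MemLp.toReal_eLpNorm_two_eq_sqrt_integral_sq {f : α → ℝ} (hf : MemLp f 2 μ) :
    (eLpNorm f 2 μ).toReal = √(∫ x, f x ^ 2 ∂μ) := by
  have h := hf.integral_norm_rpow_eq two_ne_zero ENNReal.ofNat_ne_top
  simp only [ENNReal.toReal_ofNat, Real.rpow_ofNat, Real.norm_eq_abs, sq_abs] at h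
  rw [h, Real.sqrt_sq ENNReal.toReal_nonneg]

theorem ae_norm_eq_toReal_eLpNorm_of_eLpNorm_eq_of_ne_top [IsProbabilityMeasure μ] {f : α → E}
    {p q : ℝ≥0∞} (hq : q ≠ 0) (hqp : q < p) (hp : p ≠ ∞) (hf : MemLp f q μ)
    (heq : eLpNorm f p μ = eLpNorm f q μ) :
    ∀ᵐ x ∂μ, ‖f x‖ = (eLpNorm f q μ).toReal := by
  have hq_top : q ≠ ∞ := hqp.ne_top
  have hfp : MemLp f p μ := ⟨hf.1, heq ▸ hf.2⟩
  have hq_pos : 0 < q.toReal := ENNReal.toReal_pos hq hq_top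
  have hr : 1 < p.toReal / q.toReal :=
    (one_lt_div hq_pos).2 ((ENNReal.toReal_lt_toReal hq_top hp).2 hqp)
  have hpow : ∀ t : ℝ, 0 ≤ t → (t ^ q.toReal) ^ (p.toReal / q.toReal) = t ^ p.toReal :=
    fun t ht => by rw [← Real.rpow_mul ht, mul_div_cancel₀ _ hq_pos.ne']
  rcases (strictConvexOn_rpow hr).ae_eq_const_or_map_average_lt
      (Real.continuous_rpow_const (by positivity)).continuousOn isClosed_Ici
      (ae_of_all _ fun x => Set.mem_Ici.2 (by positivity)) (hf.integrable_norm_rpow hq hq_top)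
      ((hfp.integrable_norm_rpow hqp.ne_bot hp).congr
        (ae_of_all _ fun x => (hpow _ (norm_nonneg _)).symm))
    with hconst | hlt
  · filter_upwards [hconst] with x hx
    rw [Function.const_apply, average_eq_integral, hf.integral_norm_rpow_eq hq hq_top] at hx
    exact Real.rpow_left_injOn hq_pos.ne' (norm_nonneg _) ENNReal.toReal_nonneg hx
  · simp only [average_eq_integral, hf.integral_norm_rpow_eq hq hq_top, hpow _ (norm_nonneg _),
      hpow _ ENNReal.toReal_nonneg, hfp.integral_norm_rpow_eq hqp.ne_bot hp, heq] at hlt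
    exact absurd hlt (lt_irrefl _)

theorem ae_norm_eq_toReal_eLpNorm_of_eLpNorm_eq [IsProbabilityMeasure μ] {f : α → E}
    {p q : ℝ≥0∞} (hq : q ≠ 0) (hqp : q < p) (hf : MemLp f q μ)
    (heq : eLpNorm f p μ = eLpNorm f q μ) :
    ∀ᵐ x ∂μ, ‖f x‖ = (eLpNorm f q μ).toReal := by
  obtain ⟨r, hqr, hrp⟩ := exists_between hqp
  refine ae_norm_eq_toReal_eLpNorm_of_eLpNorm_eq_of_ne_top hq hqr hrp.ne_top hf
    (le_antisymm ?_ (eLpNorm_le_eLpNorm_of_exponent_le hqr.le hf.1))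
  exact heq ▸ eLpNorm_le_eLpNorm_of_exponent_le hrp.le hf.1

theorem eLpNorm_div_sqrt_withDensity {w κ : α → ℝ} (hw : Measurable w)
    (hw_pos : ∀ᵐ x ∂μ, 0 < w x) :
    eLpNorm (fun x => κ x / √(w x)) 2 (μ.withDensity fun x => ENNReal.ofReal (w x)) =
      eLpNorm κ 2 μ := by
  simp only [eLpNorm_eq_lintegral_rpow_enorm_toReal two_ne_zero ENNReal.ofNat_ne_top,
    ENNReal.toReal_ofNat, ENNReal.rpow_ofNat]
  rw [lintegral_withDensity_eq_lintegral_mul_non_measurable _ hw.ennreal_ofReal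
    (ae_of_all _ fun _ => ENNReal.ofReal_lt_top)]
  congr 1
  refine lintegral_congr_ae ?_
  filter_upwards [hw_pos] with x hx
  rw [Pi.mul_apply, Real.enorm_sq_eq_ofReal_sq, Real.enorm_sq_eq_ofReal_sq,
    ← ENNReal.ofReal_mul hx.le, div_pow, Real.sq_sqrt hx.le, mul_div_cancel₀ _ hx.ne']

end MeasureTheory

theorem stmt_19_general {E : Type*} [MeasurableSpace E] (μ : Measure E) [IsProbabilityMeasure μ]
    (w κ : E → ℝ) (hw : Measurable w)
    (hκnonneg : ∀ x, 0 ≤ κ x)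
    (hwpos : ∀ᵐ x ∂μ, 0 < w x)
    (hprob : IsProbabilityMeasure (μ.withDensity fun x => ENNReal.ofReal (w x)))
    (hκL2 : MemLp κ 2 μ) (hκpos : 0 < ∫ x, κ x ^ 2 ∂μ)
    (p : ENNReal) (hp : 2 < p) :
    eLpNorm κ 2 μ ≤
        eLpNorm (fun x => κ x / Real.sqrt (w x)) p
          (μ.withDensity fun x => ENNReal.ofReal (w x)) ∧
      (eLpNorm (fun x => κ x / Real.sqrt (w x)) p
            (μ.withDensity fun x => ENNReal.ofReal (w x)) = eLpNorm κ 2 μ ↔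
        (∀ᵐ x ∂μ, 0 < κ x) ∧ (∀ᵐ x ∂μ, w x = κ x ^ 2 / ∫ z, κ z ^ 2 ∂μ)) ∧
      (((∀ᵐ x ∂μ, 0 < κ x) ∧ (∀ᵐ x ∂μ, w x = κ x ^ 2 / ∫ z, κ z ^ 2 ∂μ)) →
        ∀ᵐ x ∂μ, κ x / Real.sqrt (w x) = Real.sqrt (∫ z, κ z ^ 2 ∂μ)) := by
  set ν := μ.withDensity fun x => ENNReal.ofReal (w x)
  set I := ∫ z, κ z ^ 2 ∂μ
  have hνμ : ν ≪ μ := withDensity_absolutelyContinuous μ _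
  have hμν : μ ≪ ν := withDensity_absolutelyContinuous' hw.ennreal_ofReal.aemeasurable
    (hwpos.mono fun x hx => ENNReal.ofReal_pos.2 hx |>.ne')
  have hf : AEStronglyMeasurable (fun x => κ x / √(w x)) ν :=
    ((hκL2.1.mono_ac hνμ).aemeasurable.div hw.sqrt.aemeasurable).aestronglyMeasurable
  have h2 : eLpNorm (fun x => κ x / √(w x)) 2 ν = eLpNorm κ 2 μ :=
    eLpNorm_div_sqrt_withDensity hw hwpos
  have hnorm : (eLpNorm κ 2 μ).toReal = √I := hκL2.toReal_eLpNorm_two_eq_sqrt_integral_sq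
  have hopt : ((∀ᵐ x ∂μ, 0 < κ x) ∧ ∀ᵐ x ∂μ, w x = κ x ^ 2 / I) ↔
      ∀ᵐ x ∂μ, κ x / √(w x) = √I := by
    rw [← Filter.eventually_and]
    exact Filter.eventually_congr
      (hwpos.mono fun x hx => (Real.div_sqrt_eq_sqrt_iff hx hκpos).symm)
  refine ⟨h2 ▸ eLpNorm_le_eLpNorm_of_exponent_le hp.le hf,
    ⟨fun heq => hopt.2 (hμν.ae_le ?_), fun hc => ?_⟩, hopt.1⟩
  · filter_upwards [ae_norm_eq_toReal_eLpNorm_of_eLpNorm_eq two_ne_zero hp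
      ⟨hf, h2 ▸ hκL2.2⟩ (heq.trans h2.symm)] with x hx
    rwa [h2, hnorm, Real.norm_of_nonneg (div_nonneg (hκnonneg x) (Real.sqrt_nonneg _))] at hx
  · rw [eLpNorm_congr_ae (hνμ.ae_le (hopt.1 hc)), eLpNorm_const _ hp.ne_bot (NeZero.ne ν),
      ← ENNReal.ofReal_toReal hκL2.eLpNorm_ne_top, hnorm]
    simp [Real.enorm_eq_ofReal (Real.sqrt_nonneg I)]

/-- optimal sampling measure: let `μ` be a probability measure, `κ ≥ 0`
measurable with `0 < ∫ κ² dμ < ∞`, `w > 0` μ-a.s. the density of an equivalent probability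
measure `μ̃ = w·μ`, and `κ̃ = κ/√w`. Then for any `p ∈ (2, ∞]`:
`‖κ̃‖_{L^p(μ̃)} ≥ ‖κ‖_{L²(μ)}`, with equality iff `κ > 0` μ-a.s. and
`w = κ²/‖κ‖²_{L²(μ)}` μ-a.s.; in that case `κ̃ = ‖κ‖_{L²(μ)}` is constant μ-a.s. -/
theorem stmt_19 {E : Type*} [MeasurableSpace E] (μ : Measure E) [IsProbabilityMeasure μ]
    (w κ : E → ℝ) (hw : Measurable w) (hκmeas : Measurable κ)
    (hκnonneg : ∀ x, 0 ≤ κ x)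
    (hwpos : ∀ᵐ x ∂μ, 0 < w x)
    (hprob : IsProbabilityMeasure (μ.withDensity fun x => ENNReal.ofReal (w x)))
    (hκL2 : MemLp κ 2 μ) (hκpos : 0 < ∫ x, κ x ^ 2 ∂μ)
    (p : ENNReal) (hp : 2 < p) :
    eLpNorm κ 2 μ ≤
        eLpNorm (fun x => κ x / Real.sqrt (w x)) p
          (μ.withDensity fun x => ENNReal.ofReal (w x)) ∧
      (eLpNorm (fun x => κ x / Real.sqrt (w x)) p
            (μ.withDensity fun x => ENNReal.ofReal (w x)) = eLpNorm κ 2 μ ↔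
        (∀ᵐ x ∂μ, 0 < κ x) ∧ (∀ᵐ x ∂μ, w x = κ x ^ 2 / ∫ z, κ z ^ 2 ∂μ)) ∧
      (((∀ᵐ x ∂μ, 0 < κ x) ∧ (∀ᵐ x ∂μ, w x = κ x ^ 2 / ∫ z, κ z ^ 2 ∂μ)) →
        ∀ᵐ x ∂μ, κ x / Real.sqrt (w x) = Real.sqrt (∫ z, κ z ^ 2 ∂μ)) :=
  stmt_19_general μ w κ hw hκnonneg hwpos hprob hκL2 hκpos p hp
end
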